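/- arXiv:2605.09512 — 3 statements merged into one kernel-verified Lean document; each statement's English description precedes it below -/
import Mathlib

section
/- In any bicommutative algebra, the product of any two elements of the square A² commutes: for all a, b, c, d in A, (ab)(cd) = (cd)(ab). -/
/-- In any bicommutative algebra, products of pairs commute:
`(a*b)*(c*d) = (c*d)*(a*b)`. -/
theorem bicommutative_squares_commute {K : Type*} [Field K] {A : Type*}
    [NonUnitalNonAssocRing A] [Module K A] [SMulCommClass K A A] [IsScalarTower K A A]
    (hr : ∀ x y z : A, (x * y) * z = (x * z) * y)
    (hl : ∀ x y z : A, x * (y * z) = y * (x * z)) :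
    ∀ a b c d : A, (a * b) * (c * d) = (c * d) * (a * b) := by
  -- key swap lemma: (x*y)*(z*w) = (x*w)*(z*y)
  have key : ∀ x y z w : A, (x * y) * (z * w) = (x * w) * (z * y) := by
    intro x y z w
    calc (x * y) * (z * w) = z * ((x * y) * w) := by rw [hl]
      _ = z * ((x * w) * y) := by rw [hr]
      _ = (x * w) * (z * y) := by rw [hl]
  -- second swap: (x*y)*(z*w) = (z*y)*(x*w)
  have key2 : ∀ x y z w : A, (x * y) * (z * w) = (z * y) * (x * w) := by
    intro x y z w
    calc (x * y) * (z * w) = (x * (z * w)) * y := by rw [hr]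
      _ = (z * (x * w)) * y := by rw [hl]
      _ = (z * y) * (x * w) := by rw [hr]
  intro a b c d
  rw [key2, key]
end

section
/- In any bicommutative algebra A, multiplication restricted to products is associative in the following sense: for all a, b, c, d, e, f in A, ((ab)(cd))(ef) = (ab)((cd)(ef)). -/
/-- In any bicommutative algebra, multiplication of products is associative:
`((a*b)*(c*d))*(e*f) = (a*b)*((c*d)*(e*f))`. -/
theorem bicommutative_squares_assoc {K : Type*} [Field K] {A : Type*}
    [NonUnitalNonAssocRing A] [Module K A] [SMulCommClass K A A] [IsScalarTower K A A]
    (hr : ∀ x y z : A, (x * y) * z = (x * z) * y)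
    (hl : ∀ x y z : A, x * (y * z) = y * (x * z)) :
    ∀ a b c d e f : A, ((a * b) * (c * d)) * (e * f) = (a * b) * ((c * d) * (e * f)) := by
  intro a b c d e f
  have key : ∀ p q r s : A, r * ((p * s) * q) = (r * (p * s)) * q := by
    intro p q r s
    have e1 : (p * q) * (r * s) = r * ((p * s) * q) := by
      rw [hl (p * q) r s, hr p q s]
    have e2 : (p * q) * (r * s) = (r * (p * s)) * q := by
      rw [hr p q (r * s), hl p r s]
    exact e1.symm.trans e2
  exact (key c (e * f) (a * b) d).symm
end

section
/- For β₁, β₂ in a field K of characteristic 0, the 5×3 matrix with rows (0, β₁, β₂), (β₁, β₂, 0), (β₁, 0, β₂), (0, β₁+β₂, 0), (β₁, −(β₁−β₂), −β₂) has rank 3 if β₁β₂(β₁+β₂)(β₁−β₂) ≠ 0 or β₁ = β₂, and has rank 2 if β₁β₂(β₁+β₂) = 0 and (β₁,β₂) ≠ (0,0). -/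
open Matrix

lemma rank_submatrix_le' {K : Type*} [Field K] {l m n o : Type*}
    [Fintype l] [Fintype m] [Fintype n] [Fintype o] [DecidableEq m] [DecidableEq n]
    (A : Matrix m n K) (f : l → m) (g : o → n) :
    (A.submatrix f g).rank ≤ A.rank := by
  have h : A.submatrix f g =
      ((1 : Matrix m m K).submatrix f (Equiv.refl m)) * A *
        ((1 : Matrix n n K).submatrix (Equiv.refl n) g) := by
    rw [Matrix.mul_submatrix_one, Matrix.one_submatrix_mul]
    simp
  rw [h]
  exact (Matrix.rank_mul_le_left _ _).trans (Matrix.rank_mul_le_right _ _)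

lemma rank_ge_of_det_ne_zero {K : Type*} [Field K] {m n k : ℕ}
    (A : Matrix (Fin m) (Fin n) K) (f : Fin k → Fin m) (g : Fin k → Fin n)
    (h : (A.submatrix f g).det ≠ 0) : k ≤ A.rank := by
  have hu : (A.submatrix f g).rank = Fintype.card (Fin k) :=
    Matrix.rank_of_isUnit _ ((Matrix.isUnit_iff_isUnit_det _).2 (isUnit_iff_ne_zero.2 h))
  calc k = (A.submatrix f g).rank := by rw [hu, Fintype.card_fin]
    _ ≤ A.rank := rank_submatrix_le' A f g

/-- The `5 × 3` matrix with rows `(0, β₁, β₂)`, `(β₁, β₂, 0)`, `(β₁, 0, β₂)`,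
`(0, β₁+β₂, 0)`, `(β₁, −(β₁−β₂), −β₂)` has rank `3` if
`β₁β₂(β₁+β₂)(β₁−β₂) ≠ 0` or `β₁ = β₂`, and rank `2` if `β₁β₂(β₁+β₂) = 0`
(assuming `(β₁, β₂) ≠ (0,0)`). -/
theorem rank_system_21 (K : Type*) [Field K] [CharZero K] (β₁ β₂ : K)
    (hβ : (β₁, β₂) ≠ (0, 0)) :
    ((β₁ * β₂ * (β₁ + β₂) * (β₁ - β₂) ≠ 0 ∨ β₁ = β₂) →
      (!![0, β₁, β₂; β₁, β₂, 0; β₁, 0, β₂; 0, β₁+β₂, 0; β₁, -(β₁-β₂), -β₂] :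
        Matrix (Fin 5) (Fin 3) K).rank = 3) ∧
    (β₁ * β₂ * (β₁ + β₂) = 0 →
      (!![0, β₁, β₂; β₁, β₂, 0; β₁, 0, β₂; 0, β₁+β₂, 0; β₁, -(β₁-β₂), -β₂] :
        Matrix (Fin 5) (Fin 3) K).rank = 2) := by
  set A : Matrix (Fin 5) (Fin 3) K :=
    !![0, β₁, β₂; β₁, β₂, 0; β₁, 0, β₂; 0, β₁+β₂, 0; β₁, -(β₁-β₂), -β₂] with hA
  constructor
  · rintro (hprod | heq)
    · refine le_antisymm (A.rank_le_card_width.trans (by simp)) ?_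
      refine rank_ge_of_det_ne_zero A ![0,1,2] id ?_
      have hs : A.submatrix ![0,1,2] id = !![0, β₁, β₂; β₁, β₂, 0; β₁, 0, β₂] := by
        ext i j; fin_cases i <;> fin_cases j <;> rfl
      have hd : (!![0, β₁, β₂; β₁, β₂, 0; β₁, 0, β₂] : Matrix (Fin 3) (Fin 3) K).det
          = -(β₁ * β₂ * (β₁ + β₂)) := by
        simp [Matrix.det_fin_three, Matrix.vecHead, Matrix.vecTail]; ring
      rw [hs, hd]
      exact neg_ne_zero.2 (left_ne_zero_of_mul hprod)
    · subst heq
      have hb : β₁ ≠ 0 := fun h => hβ (by rw [h])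
      refine le_antisymm (A.rank_le_card_width.trans (by simp)) ?_
      refine rank_ge_of_det_ne_zero A ![1,3,4] id ?_
      have hs : A.submatrix ![1,3,4] id =
          !![β₁, β₁, 0; 0, β₁+β₁, 0; β₁, -(β₁-β₁), -β₁] := by
        ext i j; fin_cases i <;> fin_cases j <;> rfl
      have hd : (!![β₁, β₁, 0; 0, β₁+β₁, 0; β₁, -(β₁-β₁), -β₁] :
          Matrix (Fin 3) (Fin 3) K).det = -(2 * β₁^3) := by
        simp [Matrix.det_fin_three, Matrix.vecHead, Matrix.vecTail]; ring
      rw [hs, hd]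
      exact neg_ne_zero.2 (mul_ne_zero two_ne_zero (pow_ne_zero _ hb))
  · intro hzero
    have lower : β₁ ≠ 0 ∨ β₂ ≠ 0 → 2 ≤ A.rank := by
      rintro (hb1 | hb2)
      · refine rank_ge_of_det_ne_zero A ![0,1] ![0,1] ?_
        have hs : A.submatrix ![0,1] ![0,1] = !![0, β₁; β₁, β₂] := by
          ext i j; fin_cases i <;> fin_cases j <;> rfl
        rw [hs, Matrix.det_fin_two_of]
        intro h
        exact hb1 (mul_self_eq_zero.1 (by linear_combination -h))
      · refine rank_ge_of_det_ne_zero A ![0,1] ![1,2] ?_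
        have hs : A.submatrix ![0,1] ![1,2] = !![β₁, β₂; β₂, 0] := by
          ext i j; fin_cases i <;> fin_cases j <;> rfl
        rw [hs, Matrix.det_fin_two_of]
        intro h
        exact hb2 (mul_self_eq_zero.1 (by linear_combination -h))
    rcases mul_eq_zero.1 hzero with h12 | hsum
    · rcases mul_eq_zero.1 h12 with h1 | h2
      · -- β₁ = 0, β₂ ≠ 0
        have hb2 : β₂ ≠ 0 := fun h => hβ (by simp [h1, h])
        refine le_antisymm ?_ (lower (Or.inr hb2))
        have hfac : A = (!![0,β₂; β₂,0; 0,β₂; β₂,0; β₂,-β₂] : Matrix (Fin 5) (Fin 2) K)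
            * (!![0,1,0; 0,0,1] : Matrix (Fin 2) (Fin 3) K) := by
          ext i j
          fin_cases i <;> fin_cases j <;>
            simp [hA, h1, Matrix.mul_apply, Fin.sum_univ_succ,
              Matrix.vecHead, Matrix.vecTail]
        calc A.rank ≤ (!![0,β₂; β₂,0; 0,β₂; β₂,0; β₂,-β₂] :
              Matrix (Fin 5) (Fin 2) K).rank := hfac ▸ Matrix.rank_mul_le_left _ _
          _ ≤ 2 := (Matrix.rank_le_card_width _).trans (by simp)
      · -- β₂ = 0, β₁ ≠ 0
        have hb1 : β₁ ≠ 0 := fun h => hβ (by simp [h, h2])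
        refine le_antisymm ?_ (lower (Or.inl hb1))
        have hfac : A = (!![0,β₁; β₁,0; β₁,0; 0,β₁; β₁,-β₁] : Matrix (Fin 5) (Fin 2) K)
            * (!![1,0,0; 0,1,0] : Matrix (Fin 2) (Fin 3) K) := by
          ext i j
          fin_cases i <;> fin_cases j <;>
            simp [hA, h2, Matrix.mul_apply, Fin.sum_univ_succ,
              Matrix.vecHead, Matrix.vecTail]
        calc A.rank ≤ (!![0,β₁; β₁,0; β₁,0; 0,β₁; β₁,-β₁] :
              Matrix (Fin 5) (Fin 2) K).rank := hfac ▸ Matrix.rank_mul_le_left _ _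
          _ ≤ 2 := (Matrix.rank_le_card_width _).trans (by simp)
    · -- β₁ + β₂ = 0
      have hb1 : β₁ ≠ 0 := by
        intro h
        exact hβ (by simp [h, show β₂ = 0 by linear_combination hsum - h])
      refine le_antisymm ?_ (lower (Or.inl hb1))
      have h2 : β₂ = -β₁ := by linear_combination hsum
      have hfac : A = (!![0,β₁; β₁,β₂; β₁,0; 0,0; β₁,-(β₁-β₂)] :
          Matrix (Fin 5) (Fin 2) K) * (!![1,0,-1; 0,1,-1] : Matrix (Fin 2) (Fin 3) K) := by
        ext i j
        fin_cases i <;> fin_cases j <;>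
          simp [hA, h2, Matrix.mul_apply, Fin.sum_univ_succ,
            Matrix.vecHead, Matrix.vecTail]
      calc A.rank ≤ (!![0,β₁; β₁,β₂; β₁,0; 0,0; β₁,-(β₁-β₂)] :
            Matrix (Fin 5) (Fin 2) K).rank := hfac ▸ Matrix.rank_mul_le_left _ _
        _ ≤ 2 := (Matrix.rank_le_card_width _).trans (by simp)
end
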